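/- Let g : Fin 2 → Fin 2 → Fin 2 → Fin 2 → ℝ be a completely symmetric 4-tensor and define G i j = ∑_{σ,τ,ρ ∈ S₂} sign σ · sign τ · sign ρ · g i (σ 0) (τ 0) (ρ 0) · g j (σ 1) (τ 1) (ρ 1). Then G is antisymmetric (G i j = −G j i) and the scalar ∑_{π ∈ S₂} sign π · G (π 0) (π 1) equals 2 · G 0 1 = 2 · hdet g, where hdet g = g₀₀₀₀ g₁₁₁₁ − 4 g₀₀₀₁ g₀₁₁₁ + 3 g₀₀₁₁². -/

import Mathlib

/-!
Replacing each of the three permutations `σ, τ, ρ` by its composite with the transposition of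
`Fin 2` exchanges the two factors `g i …` and `g j …` and flips three signs, so `G` is
antisymmetric; the alternating sum of an antisymmetric `2 × 2` array is twice its `(0, 1)` entry.
Expanding the eight terms of `G 0 1` and sorting the indices of `g` by symmetry gives `hdet4 g`.
-/

def psgn {k : ℕ} (σ : Equiv.Perm (Fin k)) : ℝ := ((Equiv.Perm.sign σ : ℤ) : ℝ)

def hdet4 (h : Fin 2 → Fin 2 → Fin 2 → Fin 2 → ℝ) : ℝ :=
  h 0 0 0 0 * h 1 1 1 1 - 4 * (h 0 0 0 1 * h 0 1 1 1) + 3 * (h 0 0 1 1) ^ 2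

open Equiv Finset

lemma Fin.sum_perm_two {M : Type*} [AddCommMonoid M] (f : Perm (Fin 2) → M) :
    ∑ σ, f σ = f 1 + f (swap 0 1) := by
  have huniv : (univ : Finset (Perm (Fin 2))) = {1, swap 0 1} := by decide
  rw [huniv, sum_pair (by decide)]

@[simp]
lemma psgn_one {k : ℕ} : psgn (1 : Perm (Fin k)) = 1 := by
  simp [psgn]

lemma psgn_mul_swap {k : ℕ} (σ : Perm (Fin k)) {a b : Fin k} (hab : a ≠ b) :
    psgn (σ * swap a b) = -psgn σ := by
  simp [psgn, Perm.sign_mul, Perm.sign_swap hab]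

@[simp]
lemma psgn_swap_zero_one : psgn (swap (0 : Fin 2) 1) = -1 := by
  simpa using psgn_mul_swap (1 : Perm (Fin 2)) (show (0 : Fin 2) ≠ 1 by decide)

lemma sum_psgn_mul_apply_of_antisymm (G : Fin 2 → Fin 2 → ℝ) (hG : G 1 0 = -G 0 1) :
    ∑ π : Perm (Fin 2), psgn π * G (π 0) (π 1) = 2 * G 0 1 := by
  simp only [Fin.sum_perm_two, psgn_one, psgn_swap_zero_one, Perm.one_apply, swap_apply_left,
    swap_apply_right, hG]
  ring

def leviCivitaContraction (g : Fin 2 → Fin 2 → Fin 2 → Fin 2 → ℝ) (i j : Fin 2) : ℝ :=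
  ∑ σ : Perm (Fin 2), ∑ τ : Perm (Fin 2), ∑ ρ : Perm (Fin 2),
    psgn σ * psgn τ * psgn ρ * (g i (σ 0) (τ 0) (ρ 0) * g j (σ 1) (τ 1) (ρ 1))

lemma leviCivitaContraction_swap (g : Fin 2 → Fin 2 → Fin 2 → Fin 2 → ℝ) (i j : Fin 2) :
    leviCivitaContraction g j i = -leviCivitaContraction g i j := by
  let e := Equiv.mulRight (swap (0 : Fin 2) 1)
  simp only [leviCivitaContraction, ← sum_neg_distrib]
  refine Fintype.sum_equiv e _ _ fun σ => Fintype.sum_equiv e _ _ fun τ =>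
    Fintype.sum_equiv e _ _ fun ρ => ?_
  simp only [e, coe_mulRight, psgn_mul_swap _ (show (0 : Fin 2) ≠ 1 by decide), Perm.mul_apply,
    swap_apply_left, swap_apply_right]
  ring

lemma leviCivitaContraction_zero_one (g : Fin 2 → Fin 2 → Fin 2 → Fin 2 → ℝ)
    (hsym : ∀ i j k l, g i j k l = g j i k l ∧ g i j k l = g i k j l ∧ g i j k l = g i j l k) :
    leviCivitaContraction g 0 1 = hdet4 g := by
  simp only [leviCivitaContraction, Fin.sum_perm_two, psgn_one, psgn_swap_zero_one,
    Perm.one_apply, swap_apply_left, swap_apply_right]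
  grind [hdet4]

theorem stmt10 (g : Fin 2 → Fin 2 → Fin 2 → Fin 2 → ℝ)
    (hsym : ∀ i j k l, g i j k l = g j i k l ∧ g i j k l = g i k j l ∧ g i j k l = g i j l k)
    (G : Fin 2 → Fin 2 → ℝ)
    (hG : ∀ i j, G i j =
      ∑ σ : Equiv.Perm (Fin 2), ∑ τ : Equiv.Perm (Fin 2), ∑ ρ : Equiv.Perm (Fin 2),
        psgn σ * psgn τ * psgn ρ * (g i (σ 0) (τ 0) (ρ 0) * g j (σ 1) (τ 1) (ρ 1))) :
    (∀ i j, G i j = -G j i) ∧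
    (∑ π : Equiv.Perm (Fin 2), psgn π * G (π 0) (π 1)) = 2 * G 0 1 ∧
    G 0 1 = hdet4 g := by
  obtain rfl : G = leviCivitaContraction g := funext fun i => funext (hG i)
  have hanti : ∀ i j, leviCivitaContraction g i j = -leviCivitaContraction g j i :=
    fun i j => leviCivitaContraction_swap g j i
  exact ⟨hanti, sum_psgn_mul_apply_of_antisymm _ (hanti 1 0),
    leviCivitaContraction_zero_one g hsym⟩
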